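/- For every real number x with 0 < x < 1 and every positive integer n, the product ∏_{k=1}^{n} (1 - x^k) is at least exp( (x(1 - x^n)/(1 - x)) · (ln(1 - x) - 1) ). -/

import Mathlib

/-!
Each factor is bounded below separately: by concavity of `log`,
`log (1 - x ^ k) ≥ x ^ (k - 1) * log (1 - x)`, and `(1 - x) * log (1 - x) ≥ -x` turns this into
`log (1 - x ^ k) ≥ x ^ k * (log (1 - x) - 1)`. Exponentiating and multiplying over `k`, the
exponents add up to the geometric sum `x + ⋯ + x ^ n = x * (1 - x ^ n) / (1 - x)`.
-/

open Real Finset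

lemma Real.mul_log_le_log_one_sub_mul {t l : ℝ} (ht : t < 1) (hl0 : 0 ≤ l) (hl1 : l ≤ 1) :
    l * log (1 - t) ≤ log (1 - l * t) := by
  have h := strictConcaveOn_log_Ioi.concaveOn.2 (Set.mem_Ioi.mpr one_pos)
    (Set.mem_Ioi.mpr (sub_pos.mpr ht)) (sub_nonneg.mpr hl1) hl0 (sub_add_cancel 1 l)
  simp only [smul_eq_mul, log_one, mul_zero, zero_add, mul_one] at h
  rwa [show 1 - l + l * (1 - t) = 1 - l * t by ring] at h

lemma Real.sub_one_le_mul_log {y : ℝ} (hy : 0 < y) : y - 1 ≤ y * log y := by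
  have h := mul_le_mul_of_nonneg_left (one_sub_inv_le_log_of_pos hy) hy.le
  rwa [mul_sub, mul_one, mul_inv_cancel₀ hy.ne'] at h

lemma Real.pow_mul_log_one_sub_sub_one_le {x : ℝ} (hx0 : 0 ≤ x) (hx1 : x < 1) {k : ℕ}
    (hk : 1 ≤ k) : x ^ k * (log (1 - x) - 1) ≤ log (1 - x ^ k) := by
  obtain ⟨j, rfl⟩ := Nat.exists_eq_add_of_le' hk
  have hxj : 0 ≤ x ^ j := pow_nonneg hx0 j
  have hconc : x ^ j * log (1 - x) ≤ log (1 - x ^ (j + 1)) := by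
    rw [pow_succ]
    exact mul_log_le_log_one_sub_mul hx1 hxj (pow_le_one₀ hx0 hx1.le)
  have hentropy : 0 ≤ x ^ j * ((1 - x) * log (1 - x) + x) :=
    mul_nonneg hxj (by linarith [sub_one_le_mul_log (sub_pos.mpr hx1)])
  calc x ^ (j + 1) * (log (1 - x) - 1)
      = x ^ j * log (1 - x) - x ^ j * ((1 - x) * log (1 - x) + x) := by ring
    _ ≤ log (1 - x ^ (j + 1)) := by linarith

lemma geom_sum_Icc_one {x : ℝ} (hx : x ≠ 1) (n : ℕ) :
    ∑ k ∈ Icc 1 n, x ^ k = x * (1 - x ^ n) / (1 - x) := by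
  rw [← Finset.Ico_add_one_right_eq_Icc, geom_sum_Ico' hx (Nat.le_add_left 1 n)]
  ring

theorem stmt_0_general (x : ℝ) (hx0 : 0 < x) (hx1 : x < 1) (n : ℕ) :
    ∏ k ∈ Finset.Icc 1 n, (1 - x ^ k) ≥
      Real.exp (x * (1 - x ^ n) / (1 - x) * (Real.log (1 - x) - 1)) := by
  rw [← geom_sum_Icc_one hx1.ne, sum_mul, exp_sum, ge_iff_le]
  refine prod_le_prod (fun k _ => (exp_pos _).le) fun k hk => ?_
  have hk1 : 1 ≤ k := (mem_Icc.mp hk).1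
  have hpos : 0 < 1 - x ^ k := sub_pos.mpr (pow_lt_one₀ hx0.le hx1 (by omega))
  calc exp (x ^ k * (log (1 - x) - 1))
      ≤ exp (log (1 - x ^ k)) := exp_le_exp.mpr (pow_mul_log_one_sub_sub_one_le hx0.le hx1 hk1)
    _ = 1 - x ^ k := exp_log hpos

theorem stmt_0 (x : ℝ) (hx0 : 0 < x) (hx1 : x < 1) (n : ℕ) (hn : 1 ≤ n) :
    ∏ k ∈ Finset.Icc 1 n, (1 - x ^ k) ≥
      Real.exp (x * (1 - x ^ n) / (1 - x) * (Real.log (1 - x) - 1)) :=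
  stmt_0_general x hx0 hx1 n
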